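/- If j₁ = 0, j₂ > 0 and j₃ > 0, then the system b₁(b₂² − b₃²) = j₁, b₂(b₁² − b₃²) = j₂, b₃(b₁² + b₂²) = j₃ has exactly one real solution when j₃ ≤ j₂, namely (0, −(j₃²/j₂)^{1/3}, (j₂²/j₃)^{1/3}), and exactly five real solutions when j₃ > j₂: the solution (0, −(j₃²/j₂)^{1/3}, (j₂²/j₃)^{1/3}) together with the four solutions b₁ = ± √(j₃ + j₂)/(4(j₃ − j₂))^{1/6}, b₂ = b₃ = ((j₃ − j₂)/2)^{1/3}, and b₁ = ± √(j₃ − j₂)/(4(j₃ + j₂))^{1/6}, b₃ = −b₂ = ((j₃ + j₂)/2)^{1/3} (all cube roots real). -/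

import Mathlib

/-- The real cube root. -/
noncomputable def cbrt (x : ℝ) : ℝ :=
  if 0 ≤ x then x ^ ((1 : ℝ) / 3) else -((-x) ^ ((1 : ℝ) / 3))

/-! With `j₁ = 0` the first equation forces `b₁ = 0` or `b₃ = ±b₂`. On the axis `b₁ = 0` the
other two equations read `b₂ b₃² = -j₂`, `b₃ b₂² = j₃`; they determine `b₂³` and `b₃³`, hence the
one solution `(0, -cbrt (j₃²/j₂), cbrt (j₂²/j₃))`. On a branch `b₃ = ±b₂` the system becomes
triangular: `2 b³ = d` gives `b = cbrt (d/2)` and then `2 b₁² b = s` gives `b₁` up to sign, where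
`(d, s) = (j₃ - j₂, j₃ + j₂)` for `b = b₂ = b₃` and `(d, s) = (j₃ + j₂, j₃ - j₂)` for
`b = b₃ = -b₂`. As `b` has the sign of both `d` and `s`, a branch carries solutions (two of them)
exactly when `d, s > 0`, that is, when `j₂ < j₃`. -/

def HyperbolicCubicSystem {R : Type*} [CommRing R] (j₁ j₂ j₃ b₁ b₂ b₃ : R) : Prop :=
  b₁ * (b₂ ^ 2 - b₃ ^ 2) = j₁ ∧ b₂ * (b₁ ^ 2 - b₃ ^ 2) = j₂ ∧ b₃ * (b₁ ^ 2 + b₂ ^ 2) = j₃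

lemma cbrt_pow_three (x : ℝ) : cbrt x ^ 3 = x := by
  unfold cbrt
  split_ifs with h
  · rw [← Real.rpow_natCast, ← Real.rpow_mul h]
    norm_num
  · rw [neg_pow, ← Real.rpow_natCast ((-x) ^ _), ← Real.rpow_mul (by linarith)]
    norm_num

lemma eq_cbrt_iff {a x : ℝ} : a = cbrt x ↔ a ^ 3 = x := by
  rw [← (Odd.pow_inj (by decide : Odd 3)), cbrt_pow_three]

lemma cbrt_pos {x : ℝ} : 0 < cbrt x ↔ 0 < x := by
  rw [← (by decide : Odd 3).pow_pos_iff, cbrt_pow_three]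

lemma hyperbolicCubicSystem_zero_iff {R : Type*} [CommRing R] [IsDomain R] [NeZero (2 : R)]
    {j₂ j₃ b₁ b₂ b₃ : R} :
    HyperbolicCubicSystem 0 j₂ j₃ b₁ b₂ b₃ ↔
      (b₁ = 0 ∧ b₂ * b₃ ^ 2 = -j₂ ∧ b₃ * b₂ ^ 2 = j₃) ∨
      (b₃ = b₂ ∧ b₁ ≠ 0 ∧ 2 * b₂ ^ 3 = j₃ - j₂ ∧ 2 * b₁ ^ 2 * b₂ = j₃ + j₂) ∨
      (b₂ = -b₃ ∧ b₁ ≠ 0 ∧ 2 * b₃ ^ 3 = j₃ + j₂ ∧ 2 * b₁ ^ 2 * b₃ = j₃ - j₂) := by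
  constructor
  · rintro ⟨e₁, e₂, e₃⟩
    by_cases hb₁ : b₁ = 0
    · subst hb₁
      exact .inl ⟨rfl, by linear_combination -e₂, by linear_combination e₃⟩
    · have : b₂ ^ 2 = b₃ ^ 2 := by
        rw [← sub_eq_zero]; exact (mul_eq_zero.mp e₁).resolve_left hb₁
      rcases sq_eq_sq_iff_eq_or_eq_neg.mp this with rfl | rfl
      · exact .inr (.inl ⟨rfl, hb₁, by linear_combination e₃ - e₂, by linear_combination e₃ + e₂⟩)
      · exact .inr (.inr ⟨rfl, hb₁, by linear_combination e₃ + e₂, by linear_combination e₃ - e₂⟩)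
  · rintro (⟨rfl, h₂, h₃⟩ | ⟨rfl, -, h₂, h₃⟩ | ⟨rfl, -, h₂, h₃⟩)
    · exact ⟨by ring, by linear_combination -h₂, by linear_combination h₃⟩
    · refine ⟨by ring, mul_left_cancel₀ two_ne_zero ?_, mul_left_cancel₀ two_ne_zero ?_⟩
      · linear_combination h₃ - h₂
      · linear_combination h₃ + h₂
    · refine ⟨by ring, mul_left_cancel₀ two_ne_zero ?_, mul_left_cancel₀ two_ne_zero ?_⟩
      · linear_combination h₂ - h₃
      · linear_combination h₃ + h₂

lemma axis_iff_eq_cbrt {j₂ j₃ b₂ b₃ : ℝ} (h₂ : j₂ ≠ 0) (h₃ : j₃ ≠ 0) :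
    b₂ * b₃ ^ 2 = -j₂ ∧ b₃ * b₂ ^ 2 = j₃ ↔
      b₂ = -cbrt (j₃ ^ 2 / j₂) ∧ b₃ = cbrt (j₂ ^ 2 / j₃) := by
  rw [← neg_eq_iff_eq_neg (a := b₂), eq_cbrt_iff, eq_cbrt_iff, eq_div_iff h₂, eq_div_iff h₃]
  have cube_inj : Function.Injective (· ^ 3 : ℝ → ℝ) := Odd.pow_injective (by decide)
  constructor
  · rintro ⟨e₂, e₃⟩
    exact ⟨by linear_combination (b₃ * b₂ ^ 2 + j₃) * e₃ - b₂ ^ 3 * e₂,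
      by linear_combination (b₂ * b₃ ^ 2 - j₂) * e₂ - b₃ ^ 3 * e₃⟩
  · rintro ⟨e₂, e₃⟩
    refine ⟨cube_inj (mul_right_cancel₀ (b := j₂ * j₃ ^ 2) (by positivity) ?_),
      cube_inj (mul_right_cancel₀ (b := j₃ * j₂ ^ 2) (by positivity) ?_)⟩
    · linear_combination (-(b₃ ^ 3 * j₃) ^ 2) * e₂ - j₃ ^ 2 * (b₃ ^ 3 * j₃ + j₂ ^ 2) * e₃
    · linear_combination ((-b₂) ^ 3 * j₂) ^ 2 * e₃ + j₂ ^ 2 * ((-b₂) ^ 3 * j₂ + j₃ ^ 2) * e₂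

lemma sq_four_mul_rpow_one_sixth {d : ℝ} (hd : 0 ≤ d) :
    ((4 * d) ^ ((1 : ℝ) / 6)) ^ 2 = 2 * cbrt (d / 2) := by
  refine (Odd.pow_inj (by decide : Odd 3)).mp ?_
  rw [← pow_mul, ← Real.rpow_natCast, ← Real.rpow_mul (by positivity), mul_pow, cbrt_pow_three,
    show (1 / 6 : ℝ) * ((2 * 3 : ℕ) : ℝ) = 1 by norm_num, Real.rpow_one]
  ring

lemma pos_iff_pos_of_branch {a b d s : ℝ} (ha : a ≠ 0) (hd : 2 * b ^ 3 = d)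
    (hs : 2 * a ^ 2 * b = s) : 0 < d ↔ 0 < s := by
  subst hd hs
  rw [mul_pos_iff_of_pos_left two_pos, (by decide : Odd 3).pow_pos_iff,
    mul_pos_iff_of_pos_left (by positivity)]

lemma sqrt_div_rpow_one_sixth_pos {d s : ℝ} (hd : 0 < d) (hs : 0 < s) :
    0 < √s / (4 * d) ^ ((1 : ℝ) / 6) :=
  div_pos (Real.sqrt_pos.mpr hs) (Real.rpow_pos_of_pos (by positivity) _)

lemma branch_iff_eq_cbrt {a b d s : ℝ} (hd : 0 < d) (hs : 0 < s) :
    a ≠ 0 ∧ 2 * b ^ 3 = d ∧ 2 * a ^ 2 * b = s ↔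
      b = cbrt (d / 2) ∧
        (a = √s / (4 * d) ^ ((1 : ℝ) / 6) ∨ a = -(√s / (4 * d) ^ ((1 : ℝ) / 6))) := by
  have hc : 0 < cbrt (d / 2) := cbrt_pos.mpr (by positivity)
  have hr : 2 * (√s / (4 * d) ^ ((1 : ℝ) / 6)) ^ 2 * cbrt (d / 2) = s := by
    rw [div_pow, Real.sq_sqrt hs.le, sq_four_mul_rpow_one_sixth hd.le]
    field_simp
  have hb : 2 * b ^ 3 = d ↔ b = cbrt (d / 2) := by
    rw [eq_cbrt_iff]; constructor <;> intro h <;> linarith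
  rw [and_left_comm, hb, ← sq_eq_sq_iff_eq_or_eq_neg]
  constructor
  · rintro ⟨rfl, -, ha⟩
    refine ⟨rfl, mul_right_cancel₀ hc.ne' (mul_left_cancel₀ two_ne_zero ?_)⟩
    linear_combination ha - hr
  · rintro ⟨rfl, ha⟩
    refine ⟨rfl, ?_, by rw [ha, hr]⟩
    rintro rfl
    nlinarith

lemma ncard_eq_five {y z e f c₁ c₂ : ℝ} (he : e ≠ 0) (hf : f ≠ 0) (hc₁ : c₁ ≠ 0) :
    ({(0, y, z), (e, c₁, c₁), (-e, c₁, c₁), (f, -c₂, c₂), (-f, -c₂, c₂)} :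
      Set (ℝ × ℝ × ℝ)).ncard = 5 := by
  rw [Set.ncard_insert_of_notMem, Set.ncard_insert_of_notMem, Set.ncard_insert_of_notMem,
    Set.ncard_pair] <;> grind

/-- If `j₁ = 0`, `j₂ > 0`, `j₃ > 0`, then the system `b₁(b₂² − b₃²) = j₁`,
`b₂(b₁² − b₃²) = j₂`, `b₃(b₁² + b₂²) = j₃` has exactly one solution
`(0, −(j₃²/j₂)^{1/3}, (j₂²/j₃)^{1/3})` when `j₃ ≤ j₂`, and exactly five solutions when
`j₃ > j₂`: the above one together with
`(±√(j₃+j₂)/(4(j₃−j₂))^{1/6}, c₁, c₁)` with `c₁ = ((j₃−j₂)/2)^{1/3}` and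
`(±√(j₃−j₂)/(4(j₃+j₂))^{1/6}, −c₂, c₂)` with `c₂ = ((j₃+j₂)/2)^{1/3}`. -/
theorem hyperbolic_cubic_j1_zero (j₁ j₂ j₃ : ℝ)
    (h1 : j₁ = 0) (h2 : 0 < j₂) (h3 : 0 < j₃) :
    (j₃ ≤ j₂ → ∀ b₁ b₂ b₃ : ℝ,
      (b₁ * (b₂ ^ 2 - b₃ ^ 2) = j₁ ∧
        b₂ * (b₁ ^ 2 - b₃ ^ 2) = j₂ ∧
        b₃ * (b₁ ^ 2 + b₂ ^ 2) = j₃) ↔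
      (b₁ = 0 ∧ b₂ = -cbrt (j₃ ^ 2 / j₂) ∧ b₃ = cbrt (j₂ ^ 2 / j₃))) ∧
    (j₂ < j₃ →
      ∃ e f c₁ c₂ : ℝ,
        e = Real.sqrt (j₃ + j₂) / (4 * (j₃ - j₂)) ^ ((1 : ℝ) / 6) ∧
        f = Real.sqrt (j₃ - j₂) / (4 * (j₃ + j₂)) ^ ((1 : ℝ) / 6) ∧
        c₁ = cbrt ((j₃ - j₂) / 2) ∧
        c₂ = cbrt ((j₃ + j₂) / 2) ∧
        {t : ℝ × ℝ × ℝ |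
            t.1 * (t.2.1 ^ 2 - t.2.2 ^ 2) = j₁ ∧
            t.2.1 * (t.1 ^ 2 - t.2.2 ^ 2) = j₂ ∧
            t.2.2 * (t.1 ^ 2 + t.2.1 ^ 2) = j₃} =
          {(0, -cbrt (j₃ ^ 2 / j₂), cbrt (j₂ ^ 2 / j₃)),
            (e, c₁, c₁), (-e, c₁, c₁), (f, -c₂, c₂), (-f, -c₂, c₂)} ∧
        ({(0, -cbrt (j₃ ^ 2 / j₂), cbrt (j₂ ^ 2 / j₃)),
            (e, c₁, c₁), (-e, c₁, c₁), (f, -c₂, c₂), (-f, -c₂, c₂)} :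
          Set (ℝ × ℝ × ℝ)).ncard = 5) := by
  subst h1
  have hsum : 0 < j₃ + j₂ := by positivity
  refine ⟨fun hle b₁ b₂ b₃ => ?_, fun hlt => ?_⟩
  · change HyperbolicCubicSystem 0 j₂ j₃ b₁ b₂ b₃ ↔ _
    rw [hyperbolicCubicSystem_zero_iff, ← axis_iff_eq_cbrt h2.ne' h3.ne']
    refine ⟨?_, .inl⟩
    rintro (h | ⟨-, ha, hd, hs⟩ | ⟨-, ha, hd, hs⟩)
    · exact h
    · exact absurd ((pos_iff_pos_of_branch ha hd hs).mpr hsum) (by linarith)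
    · exact absurd ((pos_iff_pos_of_branch ha hd hs).mp hsum) (by linarith)
  · have hdiff : 0 < j₃ - j₂ := by linarith
    refine ⟨_, _, _, _, rfl, rfl, rfl, rfl, ?_, ncard_eq_five ?_ ?_ ?_⟩
    · ext ⟨b₁, b₂, b₃⟩
      change HyperbolicCubicSystem 0 j₂ j₃ b₁ b₂ b₃ ↔ _
      rw [hyperbolicCubicSystem_zero_iff, axis_iff_eq_cbrt h2.ne' h3.ne',
        branch_iff_eq_cbrt hdiff hsum, branch_iff_eq_cbrt hsum hdiff]
      simp only [Set.mem_insert_iff, Set.mem_singleton_iff, Prod.mk.injEq]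
      constructor
      · rintro (h | ⟨rfl, rfl, rfl | rfl⟩ | ⟨rfl, rfl, rfl | rfl⟩)
        · exact .inl h
        all_goals simp
      · rintro (h | ⟨rfl, rfl, rfl⟩ | ⟨rfl, rfl, rfl⟩ | ⟨rfl, rfl, rfl⟩ | ⟨rfl, rfl, rfl⟩)
        · exact .inl h
        all_goals simp
    · exact (sqrt_div_rpow_one_sixth_pos hdiff hsum).ne'
    · exact (sqrt_div_rpow_one_sixth_pos hsum hdiff).ne'
    · exact (cbrt_pos.mpr (by linarith)).ne'
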